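/- arXiv:2412.18628 — 5 statements merged into one kernel-verified Lean document; each statement's English description precedes it below -/
import Mathlib

section
/- There is no multi-issue weighted proportional rule that coincides with the Shapley index on all streaming problems: every multi-issue weighted proportional rule P^w satisfies reallocation-proofness, but the Shapley index does not. -/
/-!
A weighted proportional rule awards agent `i` the amount `∑ⱼ cᵢⱼ / Cʲ · wⱼ(C, E) · E`, so the
total awarded to a coalition `S` depends only on the coalition's aggregate claims and the issue
totals `C`; a reallocation of claims inside `S` changes neither. The Shapley index instead
counts, on each stream, how many agents have a positive claim, and splitting a claim changes
that count: moving one of agent 0's two units of stream 0 to agent 1 (who in exchange passes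
his unit of stream 1 to agent 0) turns the award of `{0, 1}` from `3/2` into `5/3`.
-/

open Finset

section WeightedProportional

variable {N K : Type} [Fintype N]

def issueTotals (c : N → K → ℝ) (j : K) : ℝ := ∑ i, c i j

noncomputable def weightedProportional [Fintype K] (w : (K → ℝ) → ℝ → K → ℝ) (c : N → K → ℝ)
    (E : ℝ) (i : N) : ℝ :=
  ∑ j, c i j / issueTotals c j * w (issueTotals c) E j * E

def IsReallocation (S : Finset N) (c c' : N → K → ℝ) : Prop :=
  (∀ i ∉ S, c i = c' i) ∧ ∀ j, ∑ i ∈ S, c i j = ∑ i ∈ S, c' i j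

theorem IsReallocation.issueTotals_eq {S : Finset N} {c c' : N → K → ℝ}
    (h : IsReallocation S c c') : issueTotals c = issueTotals c' := by
  classical
  funext j
  simp only [issueTotals, ← sum_add_sum_compl S, h.2 j]
  congr 1
  exact sum_congr rfl fun i hi => congrFun (h.1 i (mem_compl.mp hi)) j

theorem sum_weightedProportional [Fintype K] (w : (K → ℝ) → ℝ → K → ℝ) (c : N → K → ℝ) (E : ℝ)
    (S : Finset N) :
    ∑ i ∈ S, weightedProportional w c E i =
      ∑ j, (∑ i ∈ S, c i j) / issueTotals c j * w (issueTotals c) E j * E := by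
  simp only [weightedProportional, sum_comm (s := S), sum_div, sum_mul]

theorem weightedProportional_sum_eq_of_isReallocation [Fintype K] (w : (K → ℝ) → ℝ → K → ℝ)
    (E : ℝ) {S : Finset N} {c c' : N → K → ℝ} (h : IsReallocation S c c') :
    ∑ i ∈ S, weightedProportional w c E i = ∑ i ∈ S, weightedProportional w c' E i := by
  simp only [sum_weightedProportional, h.issueTotals_eq, h.2]

end WeightedProportional

/-- `t i j` is the number of times user `i` streamed artist `j`. -/
noncomputable def shapley {N M : Type} [Fintype N] [Fintype M] (t : N → M → ℕ) (i : N) : ℝ :=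
  ∑ j, if 0 < t i j then (1 : ℝ) / (#{i' | 0 < t i' j} : ℝ) else 0

theorem exists_isReallocation_shapley_sum_ne :
    ∃ (t t' : Fin 3 → Fin 2 → ℕ) (S : Finset (Fin 3)),
      (∀ j, 0 < ∑ i, t i j) ∧ (∀ j, 0 < ∑ i, t' i j) ∧
      IsReallocation S (fun i j => (t i j : ℝ)) (fun i j => (t' i j : ℝ)) ∧
      ∑ i ∈ S, shapley t i ≠ ∑ i ∈ S, shapley t' i := by
  refine ⟨![![2, 0], ![0, 1], ![1, 0]], ![![1, 1], ![1, 0], ![1, 0]], {0, 1},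
    by decide, by decide, ⟨?_, ?_⟩, ?_⟩
  · intro i hi
    fin_cases i <;> simp_all
  · intro j
    fin_cases j <;> norm_num
  · simp [shapley, Fin.univ_succ, filter_insert, filter_singleton]
    norm_num

/-- There is no multi-issue weighted proportional rule (given by a weight
function assigning a probability distribution over the issues) that coincides
with the Shapley index on all streaming problems. -/
theorem no_weightedProportional_eq_shapley :
    ¬ ∃ w : (K : Type) → [Fintype K] → (K → ℝ) → ℝ → (K → ℝ),
      (∀ (K : Type) [Fintype K] (C : K → ℝ) (E : ℝ),
        (∀ j, 0 ≤ w K C E j) ∧ ∑ j, w K C E j = 1) ∧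
      (∀ (N M : Type) [Fintype N] [Fintype M] (t : N → M → ℕ),
        (∀ j, 0 < ∑ i, t i j) →
        ∀ i, ∑ j, ((t i j : ℝ) / (∑ i', (t i' j : ℝ))) *
            w M (fun k => ∑ i', (t i' k : ℝ)) (Fintype.card M : ℝ) j *
            (Fintype.card M : ℝ) =
          ∑ j, if 0 < t i j then
            (1 : ℝ) / ((Finset.univ.filter (fun i' => 0 < t i' j)).card : ℝ) else 0) := by
  rintro ⟨w, -, hsh⟩
  obtain ⟨t, t', S, ht, ht', hre, hne⟩ := exists_isReallocation_shapley_sum_ne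
  have hP : ∀ t : Fin 3 → Fin 2 → ℕ, (∀ j, 0 < ∑ i, t i j) → ∀ i,
      weightedProportional (w (Fin 2)) (fun i j => (t i j : ℝ)) (Fintype.card (Fin 2)) i =
        shapley t i :=
    hsh (Fin 3) (Fin 2)
  refine hne ?_
  rw [← sum_congr rfl fun i _ => hP t ht i, ← sum_congr rfl fun i _ => hP t' ht' i]
  exact weightedProportional_sum_eq_of_isReallocation _ _ hre
end

section
/- The Shapley index equals the two-stage rule with CEA in both stages: for every artist i, Sh_i(N,M,t) = \sum_{j\in M} CEA_i(N, t_{.j}, CEA_j(M,(T^k)_k,m)), where CEA_i(N, t_{.j}, 1) = 1/|L^j| if t_{ij} > 0 and 0 otherwise. -/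
/-- Auxiliary: if nonnegative `mu`'s CEA-truncated sum against integer claims equals 1,
then each truncated claim is `min mu 1` on positive claims and `0` on zero claims. -/
lemma cea_unit_aux {N : Type} [Fintype N] (c : N → ℕ) (mu : ℝ) (hmu0 : 0 ≤ mu)
    (hsum : ∑ i, min mu (c i : ℝ) = 1) :
    ∀ i, min mu (c i : ℝ) = if 0 < c i then min mu 1 else 0 := by
  intro i
  by_cases h : 0 < c i
  · have hc1 : (1 : ℝ) ≤ (c i : ℝ) := by exact_mod_cast h
    rw [if_pos h]
    rcases le_or_gt mu 1 with hmu1 | hmu1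
    · rw [min_eq_left (le_trans hmu1 hc1), min_eq_left hmu1]
    · rw [min_eq_right hmu1.le]
      refine le_antisymm ?_ (le_min hmu1.le hc1)
      calc min mu (c i : ℝ) ≤ ∑ i, min mu (c i : ℝ) := by
            apply Finset.single_le_sum (f := fun i => min mu (c i : ℝ))
              (fun i _ => le_min hmu0 (Nat.cast_nonneg _)) (Finset.mem_univ i)
        _ = 1 := hsum
  · have : c i = 0 := Nat.eq_zero_of_not_pos h
    rw [if_neg h, this]
    simpa using min_eq_right hmu0

/-- Auxiliary: the per-user CEA splits the unit equally among positive claimants. -/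
lemma cea_unit {N : Type} [Fintype N] (c : N → ℕ) (mu : ℝ) (hmu0 : 0 ≤ mu)
    (hsum : ∑ i, min mu (c i : ℝ) = 1) :
    ∀ i, min mu (c i : ℝ) =
      if 0 < c i then (1 : ℝ) / ((Finset.univ.filter (fun i' => 0 < c i')).card : ℝ)
      else 0 := by
  set L := Finset.univ.filter (fun i' => 0 < c i') with hL
  have key := cea_unit_aux c mu hmu0 hsum
  have hsum2 : (L.card : ℝ) * min mu 1 = 1 := by
    have heq : ∑ i, min mu (c i : ℝ) = (L.card : ℝ) * min mu 1 := by
      rw [Finset.sum_congr rfl (fun i _ => key i), Finset.sum_ite, Finset.sum_const,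
        Finset.sum_const, smul_zero, add_zero, nsmul_eq_mul, hL]
    rw [← heq, hsum]
  have hLpos : 0 < L.card := by
    by_contra hc
    rw [Nat.eq_zero_of_not_pos hc] at hsum2
    norm_num at hsum2
  have hcast : (0 : ℝ) < (L.card : ℝ) := by exact_mod_cast hLpos
  have hval : min mu 1 = 1 / (L.card : ℝ) := by
    field_simp
    linarith [hsum2]
  intro i
  rw [key i, hval]

/-- The Shapley index equals the two-stage rule with CEA in both stages:
the first stage (`lam`) gives each user 1, and the second stage (`mu j`) splits
each user's unit equally among the artists the user streamed. -/
theorem twoStage_CEA_CEA_eq_shapley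
    (N M : Type) [Fintype N] [Fintype M] (t : N → M → ℕ)
    (hT : ∀ j, 0 < ∑ i, t i j)
    (lam : ℝ) (hlam0 : 0 ≤ lam)
    (hlam : ∑ j, min lam (∑ i, (t i j : ℝ)) = (Fintype.card M : ℝ))
    (mu : M → ℝ) (hmu0 : ∀ j, 0 ≤ mu j)
    (hmu : ∀ j, ∑ i, min (mu j) (t i j : ℝ) = min lam (∑ i, (t i j : ℝ))) :
    ∀ i, ∑ j, min (mu j) (t i j : ℝ) =
      ∑ j, if 0 < t i j then
        (1 : ℝ) / ((Finset.univ.filter (fun i' => 0 < t i' j)).card : ℝ) else 0 := by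
  intro i
  by_cases hM : IsEmpty M
  · simp
  rw [not_isEmpty_iff] at hM
  have hT' : ∀ j, (1 : ℝ) ≤ ∑ i, (t i j : ℝ) := by
    intro j
    have : (1 : ℕ) ≤ ∑ i, t i j := hT j
    calc (1 : ℝ) ≤ ((∑ i, t i j : ℕ) : ℝ) := by exact_mod_cast this
      _ = ∑ i, (t i j : ℝ) := by push_cast; ring
  -- first stage: each user receives exactly 1
  have h1 : ∀ j, min lam (∑ i, (t i j : ℝ)) = 1 := by
    have hlam1 : 1 ≤ lam := by
      by_contra h
      push_neg at h
      have hcard : 0 < (Fintype.card M : ℝ) := by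
        exact_mod_cast Fintype.card_pos
      have : ∑ j, min lam (∑ i, (t i j : ℝ)) < (Fintype.card M : ℝ) := by
        calc ∑ j, min lam (∑ i, (t i j : ℝ)) ≤ ∑ _j : M, lam :=
              Finset.sum_le_sum (fun j _ => min_le_left _ _)
          _ = (Fintype.card M : ℝ) * lam := by
              simp [Finset.sum_const, nsmul_eq_mul]
          _ < (Fintype.card M : ℝ) * 1 := by
              exact mul_lt_mul_of_pos_left h hcard
          _ = (Fintype.card M : ℝ) := mul_one _
      linarith [hlam]
    have hzero : ∑ j, (min lam (∑ i, (t i j : ℝ)) - 1) = 0 := by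
      rw [Finset.sum_sub_distrib, hlam]
      simp
    have hnn : ∀ j ∈ Finset.univ, 0 ≤ min lam (∑ i, (t i j : ℝ)) - 1 := by
      intro j _
      have : 1 ≤ min lam (∑ i, (t i j : ℝ)) := le_min hlam1 (hT' j)
      linarith
    intro j
    have := (Finset.sum_eq_zero_iff_of_nonneg hnn).mp hzero j (Finset.mem_univ j)
    linarith
  -- second stage
  refine Finset.sum_congr rfl (fun j _ => ?_)
  exact cea_unit (fun i' => t i' j) (mu j) (hmu0 j) (by rw [hmu j, h1 j]) i
end

section
/- Every allocation achievable by a two-stage rule with CEA in the first stage and, for each issue, a claims rule satisfying non-negativity and dummy in the second stage, is achievable by a probabilistic index: if x = R^{CEA,\phi}(N,K,c,E) with each \phi^j nonnegative and assigning 0 to zero claims, then there is a probability system \rho with I^\rho(N,M,t) = x, namely \rho_i(j,y) = \phi^j_i(N,y,1). -/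
/-- Every allocation of a two-stage rule with CEA in the first stage and, for
each issue, a claims rule satisfying non-negativity and dummy in the second
stage, is achievable by a probabilistic index. -/
theorem twoStage_CEA_phi_is_probabilistic
    (N M : Type) [Fintype N] [Fintype M] (t : N → M → ℕ)
    (hT : ∀ j, 0 < ∑ i, t i j)
    (φ : M → (N → ℕ) → ℝ → N → ℝ)
    (hφ : ∀ j (c : N → ℕ) (E : ℝ), 0 ≤ E → E ≤ ∑ i, (c i : ℝ) →
      (∀ i, 0 ≤ φ j c E i) ∧ (∀ i, c i = 0 → φ j c E i = 0) ∧ ∑ i, φ j c E i = E)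
    (lam : ℝ)
    (hlam : ∑ j, min lam (∑ i, (t i j : ℝ)) = (Fintype.card M : ℝ))
    (x : N → ℝ)
    (hx : ∀ i, x i = ∑ j, φ j (fun i' => t i' j) (min lam (∑ i', (t i' j : ℝ))) i) :
    ∃ ρ : M → (N → ℕ) → N → ℝ,
      (∀ j (y : N → ℕ), 0 < ∑ i, y i →
        (∀ i, 0 ≤ ρ j y i ∧ ρ j y i ≤ 1) ∧ (∀ i, y i = 0 → ρ j y i = 0) ∧
          ∑ i, ρ j y i = 1) ∧
      ∀ i, ∑ j, ρ j (fun i' => t i' j) i = x i := by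
  -- Each min lam T_j equals 1
  have hmin : ∀ j : M, min lam (∑ i, (t i j : ℝ)) = 1 := by
    intro j0
    have hcard : 0 < Fintype.card M := Fintype.card_pos_iff.mpr ⟨j0⟩
    have hTj : ∀ j : M, (1 : ℝ) ≤ ∑ i, (t i j : ℝ) := by
      intro j
      have := hT j
      have : (1 : ℕ) ≤ ∑ i, t i j := this
      calc (1:ℝ) ≤ ((∑ i, t i j : ℕ) : ℝ) := by exact_mod_cast this
        _ = ∑ i, (t i j : ℝ) := by push_cast; ring
    have hlam1 : (1 : ℝ) ≤ lam := by
      by_contra h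
      push_neg at h
      have hle : ∑ j, min lam (∑ i, (t i j : ℝ)) ≤ ∑ _j : M, lam :=
        Finset.sum_le_sum fun j _ => min_le_left _ _
      rw [Finset.sum_const, Finset.card_univ, nsmul_eq_mul] at hle
      have hlt : (Fintype.card M : ℝ) * lam < (Fintype.card M : ℝ) * 1 := by
        apply mul_lt_mul_of_pos_left h
        exact_mod_cast hcard
      rw [mul_one] at hlt
      linarith [hlam]
    have hge : ∀ j : M, (1 : ℝ) ≤ min lam (∑ i, (t i j : ℝ)) := fun j =>
      le_min hlam1 (hTj j)
    have hsum : ∑ _j : M, (1 : ℝ) = ∑ j, min lam (∑ i, (t i j : ℝ)) := by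
      rw [hlam, Finset.sum_const, Finset.card_univ, nsmul_eq_mul, mul_one]
    have := (Finset.sum_eq_sum_iff_of_le (fun j _ => hge j)).mp hsum
    exact (this j0 (Finset.mem_univ j0)).symm
  refine ⟨fun j y => φ j y 1, ?_, ?_⟩
  · intro j y hy
    have hy1 : (1 : ℝ) ≤ ∑ i, (y i : ℝ) := by
      have : (1 : ℕ) ≤ ∑ i, y i := hy
      calc (1:ℝ) ≤ ((∑ i, y i : ℕ) : ℝ) := by exact_mod_cast this
        _ = ∑ i, (y i : ℝ) := by push_cast; ring
    obtain ⟨h1, h2, h3⟩ := hφ j y 1 zero_le_one hy1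
    refine ⟨fun i => ⟨h1 i, ?_⟩, h2, h3⟩
    calc φ j y 1 i ≤ ∑ i', φ j y 1 i' :=
          Finset.single_le_sum (fun i' _ => h1 i') (Finset.mem_univ i)
      _ = 1 := h3
  · intro i
    rw [hx i]
    exact Finset.sum_congr rfl fun j _ => by rw [hmin j]
end

section
/- Every allocation of a two-stage rule with a positivity-satisfying rule \psi in the first stage and the proportional rule in the second stage is induced by a user-weighted index: setting w_j = \psi_j(M,(T^k)_k,m)/T^j > 0, one has R^{I^w}(N,M,t) = R^{\psi,P}(N,K,c,E). -/
/-- Every allocation of a two-stage rule with a positivity-satisfying rule in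
the first stage (with first-stage values `s j = ψ_j(M,(T^k)_k,m) > 0` summing
to `m`) and the proportional rule in the second stage is induced by the
user-weighted index with weights `w j = s j / T^j > 0`. -/
theorem twoStage_psi_P_is_userWeighted
    (N M : Type) [Fintype N] [Fintype M] (t : N → M → ℕ)
    (hT : ∀ j, 0 < ∑ i, t i j)
    (s : M → ℝ) (hsum : ∑ j, s j = (Fintype.card M : ℝ)) (hpos : ∀ j, 0 < s j) :
    ∀ i, (∑ j, (s j / (∑ i', (t i' j : ℝ))) * (t i j : ℝ)) /
        (∑ i', ∑ j, (s j / (∑ k, (t k j : ℝ))) * (t i' j : ℝ)) *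
        (Fintype.card M : ℝ) =
      ∑ j, ((t i j : ℝ) / (∑ i', (t i' j : ℝ))) * s j := by
  intro i
  rcases isEmpty_or_nonempty M with hM | hM
  · simp
  have hTpos : ∀ j, (0:ℝ) < ∑ i, (t i j : ℝ) := by
    intro j; exact_mod_cast hT j
  have hden : (∑ i', ∑ j, (s j / (∑ k, (t k j : ℝ))) * (t i' j : ℝ))
      = (Fintype.card M : ℝ) := by
    rw [Finset.sum_comm, ← hsum]
    refine Finset.sum_congr rfl fun j _ => ?_
    rw [← Finset.mul_sum, div_mul_cancel₀ _ (hTpos j).ne']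
  have hcard : (0:ℝ) < Fintype.card M := by
    rw [← hsum]
    exact Finset.sum_pos (fun j _ => hpos j) Finset.univ_nonempty
  rw [hden, div_mul_cancel₀ _ hcard.ne']
  exact Finset.sum_congr rfl fun j _ => by
    rw [div_mul_eq_mul_div, div_mul_eq_mul_div, mul_comm]
end

section
/- The set of rewards induced by user-weighted indices equals the set of allocations induced by two-stage rules with a positivity-satisfying first-stage rule and the proportional rule in the second stage: UWI(N,M,t) = PP(N,K,c,E). -/
/-- The set of rewards induced by user-weighted indices equals the set of
allocations induced by two-stage rules with a positivity-satisfying first-stage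
rule and the proportional rule in the second stage: `UWI(N,M,t) = PP(N,K,c,E)`. -/
theorem UWI_eq_PP
    (N M : Type) [Fintype N] [Fintype M] (t : N → M → ℕ)
    (hT : ∀ j, 0 < ∑ i, t i j) :
    {x : N → ℝ | ∃ w : M → ℝ, (∀ j, 0 < w j) ∧
      ∀ i, x i = (∑ j, w j * (t i j : ℝ)) / (∑ i', ∑ j, w j * (t i' j : ℝ)) *
        (Fintype.card M : ℝ)}
    =
    {x : N → ℝ | ∃ s : M → ℝ, (∑ j, s j = (Fintype.card M : ℝ)) ∧
      (∀ j, 0 < s j) ∧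
      ∀ i, x i = ∑ j, ((t i j : ℝ) / (∑ i', (t i' j : ℝ))) * s j} := by
  have hTpos : ∀ j, (0:ℝ) < ∑ i, (t i j : ℝ) := by
    intro j
    exact_mod_cast hT j
  have hswap : ∀ w : M → ℝ, (∑ i' : N, ∑ j, w j * (t i' j : ℝ))
      = ∑ j, w j * (∑ i : N, (t i j : ℝ)) := by
    intro w
    rw [Finset.sum_comm]
    simp [Finset.mul_sum]
  ext x
  simp only [Set.mem_setOf_eq]
  constructor
  · rintro ⟨w, hw, hx⟩
    set S : ℝ := ∑ j, w j * (∑ i : N, (t i j : ℝ)) with hS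
    rcases isEmpty_or_nonempty M with hM | hM
    · refine ⟨fun _ => 1, by simp, fun j => one_pos, fun i => ?_⟩
      rw [hx i]
      simp
    have hSpos : 0 < S := Finset.sum_pos
      (fun j _ => mul_pos (hw j) (hTpos j)) (by simp [Finset.univ_nonempty])
    refine ⟨fun j => w j * (∑ i : N, (t i j : ℝ)) / S * (Fintype.card M : ℝ),
      ?_, fun j => ?_, fun i => ?_⟩
    · rw [← Finset.sum_mul, ← Finset.sum_div, ← hS, div_self hSpos.ne']
      ring
    · have hcard : (0:ℝ) < (Fintype.card M : ℝ) := by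
        exact_mod_cast Fintype.card_pos
      exact mul_pos (div_pos (mul_pos (hw j) (hTpos j)) hSpos) hcard
    · rw [hx i, hswap w, ← hS, Finset.sum_div, Finset.sum_mul]
      refine Finset.sum_congr rfl fun j _ => ?_
      field_simp [hSpos.ne', (hTpos j).ne']
  · rintro ⟨s, hsum, hs, hx⟩
    refine ⟨fun j => s j / (∑ i : N, (t i j : ℝ)),
      fun j => div_pos (hs j) (hTpos j), fun i => ?_⟩
    have hnum : ∀ i' : N, (∑ j, s j / (∑ i : N, (t i j : ℝ)) * (t i' j : ℝ))
        = ∑ j, ((t i' j : ℝ) / (∑ i'', (t i'' j : ℝ))) * s j := by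
      intro i'
      refine Finset.sum_congr rfl fun j _ => ?_
      field_simp
    have hden : (∑ i' : N, ∑ j, s j / (∑ i : N, (t i j : ℝ)) * (t i' j : ℝ))
        = (Fintype.card M : ℝ) := by
      rw [hswap]
      rw [← hsum]
      refine Finset.sum_congr rfl fun j _ => ?_
      exact div_mul_cancel₀ _ (hTpos j).ne'
    rw [hnum i, hden, ← hx i]
    rcases isEmpty_or_nonempty M with hM | hM
    · have : x i = 0 := by rw [hx i]; simp
      simp [this]
    · have hcard : (0:ℝ) < (Fintype.card M : ℝ) := by
        exact_mod_cast Fintype.card_pos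
      field_simp
end
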